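/- Let K_I be n×n positive definite and let D₀ be the e-projection of a positive definite M onto the completion manifold (D_vh = −K_I S_vh S_hh⁻¹, D_hh = S_hh⁻¹ + S_hh⁻¹S_vhᵀK_I S_vh S_hh⁻¹). Then D₀ is positive definite and its Schur complement D_hh − D_vhᵀ K_I⁻¹ D_vh equals S_hh⁻¹. -/

import Mathlib

/-!
With `X = S_vh S_hh⁻¹` the e-projection reads `D_vh = -K_I X` and `D_hh = S_hh⁻¹ + Xᵀ K_I X`,
so the Schur complement of `K_I` in `D₀` collapses to `S_hh⁻¹`. This is positive definite, being
the inverse of a principal block of the positive definite `M⁻¹`, and a block matrix with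
positive definite corner and positive definite Schur complement is positive definite.
-/

open Matrix
open scoped ComplexOrder

namespace Matrix

variable {m n 𝕜 : Type*} [RCLike 𝕜]

theorem PosDef.toBlocks₂₂ {M : Matrix (m ⊕ n) (m ⊕ n) 𝕜} (hM : M.PosDef) :
    M.toBlocks₂₂.PosDef :=
  hM.submatrix Sum.inr_injective

variable [Fintype n]

theorem transpose_mul_inv_mul_of_transpose_eq {R : Type*} [DecidableEq n] [CommRing R]
    {K : Matrix n n R} (hK : Kᵀ = K) (hKu : IsUnit K) (X : Matrix n m R) :
    (K * X)ᵀ * K⁻¹ * (K * X) = Xᵀ * K * X := by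
  rw [transpose_mul, hK, Matrix.mul_assoc, Matrix.mul_assoc,
    nonsing_inv_mul_cancel_left K X (K.isUnit_iff_isUnit_det.1 hKu)]
  simp only [Matrix.mul_assoc]

variable [Fintype m]

/-- The block matrix is positive semidefinite by the Schur complement criterion, and its
determinant `det A * det (D - Bᴴ A⁻¹ B)` is nonzero. -/
theorem PosDef.fromBlocks₁₁_of_schur [DecidableEq m] [DecidableEq n] {A : Matrix m m 𝕜}
    (B : Matrix m n 𝕜) (D : Matrix n n 𝕜) (hA : A.PosDef) (hS : (D - Bᴴ * A⁻¹ * B).PosDef) :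
    (fromBlocks A B Bᴴ D).PosDef := by
  let := hA.isUnit.invertible
  refine ((PosDef.fromBlocks₁₁ B D hA).2 hS.posSemidef).posDef_iff_det_ne_zero.2 ?_
  rw [det_fromBlocks₁₁, invOf_eq_nonsing_inv]
  exact mul_ne_zero hA.det_pos.ne' hS.det_pos.ne'

end Matrix

theorem e_projection_posdef_schur_general (n m : ℕ)
    (M : Matrix (Fin n ⊕ Fin m) (Fin n ⊕ Fin m) ℝ) (hM : M.PosDef)
    (KI : Matrix (Fin n) (Fin n) ℝ) (hKI : KI.PosDef)
    (Svh : Matrix (Fin n) (Fin m) ℝ) (Shh : Matrix (Fin m) (Fin m) ℝ)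
    (hShh : Shh = M⁻¹.toBlocks₂₂)
    (Dvh : Matrix (Fin n) (Fin m) ℝ) (Dhh : Matrix (Fin m) (Fin m) ℝ)
    (hDvh : Dvh = -(KI * Svh * Shh⁻¹))
    (hDhh : Dhh = Shh⁻¹ + Shh⁻¹ * Svhᵀ * KI * Svh * Shh⁻¹) :
    (fromBlocks KI Dvh Dvhᵀ Dhh).PosDef ∧ Dhh - Dvhᵀ * KI⁻¹ * Dvh = Shh⁻¹ := by
  have hShh_pd : Shh.PosDef := hShh ▸ hM.inv.toBlocks₂₂
  have hKI_symm : KIᵀ = KI := by simpa using hKI.isHermitian.eq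
  have hShh_inv_symm : Shh⁻¹ᵀ = Shh⁻¹ := by simpa using hShh_pd.inv.isHermitian.eq
  have hSchur : Dhh - Dvhᵀ * KI⁻¹ * Dvh = Shh⁻¹ := by
    rw [hDhh, hDvh, Matrix.mul_assoc KI, transpose_neg, Matrix.neg_mul, Matrix.neg_mul,
      Matrix.mul_neg, neg_neg,
      transpose_mul_inv_mul_of_transpose_eq hKI_symm hKI.isUnit (Svh * Shh⁻¹), transpose_mul,
      hShh_inv_symm]
    simp only [Matrix.mul_assoc, add_sub_cancel_right]
  refine ⟨?_, hSchur⟩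
  simpa using PosDef.fromBlocks₁₁_of_schur Dvh Dhh hKI (by simpa [hSchur] using hShh_pd.inv)

theorem e_projection_posdef_schur (n m : ℕ)
    (M : Matrix (Fin n ⊕ Fin m) (Fin n ⊕ Fin m) ℝ) (hM : M.PosDef)
    (KI : Matrix (Fin n) (Fin n) ℝ) (hKI : KI.PosDef)
    (Svh : Matrix (Fin n) (Fin m) ℝ) (Shh : Matrix (Fin m) (Fin m) ℝ)
    (hSvh : Svh = M⁻¹.toBlocks₁₂) (hShh : Shh = M⁻¹.toBlocks₂₂)
    (Dvh : Matrix (Fin n) (Fin m) ℝ) (Dhh : Matrix (Fin m) (Fin m) ℝ)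
    (hDvh : Dvh = -(KI * Svh * Shh⁻¹))
    (hDhh : Dhh = Shh⁻¹ + Shh⁻¹ * Svhᵀ * KI * Svh * Shh⁻¹) :
    (fromBlocks KI Dvh Dvhᵀ Dhh).PosDef ∧ Dhh - Dvhᵀ * KI⁻¹ * Dvh = Shh⁻¹ :=
  e_projection_posdef_schur_general n m M hM KI hKI Svh Shh hShh Dvh Dhh hDvh hDhh
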